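/- arXiv:2208.13158 — 2 statements merged into one kernel-verified Lean document; each statement's English description precedes it below -/
import Mathlib

section
/- Consider N polytopes P_i = conv{v_{i,1},…,v_{i,n_i}} ⊆ ℝ^n, distinct binary codes z̄_1,…,z̄_N ∈ {0,1}^m with N ≤ 2^m, binary variables z ∈ {0,1}^m, and multipliers λ_{i,j} ∈ [0,1]. Suppose x = Σ_i Σ_j λ_{i,j} v_{i,j}, Σ_i Σ_j λ_{i,j} = 1, and for each i, Σ_{k≠i} Σ_j λ_{k,j} ≤ Σ_{l=1}^m |z_l − z̄_{i,l}|. Then if z = z̄_i for some i, all λ_{k,j} with k ≠ i are zero and x ∈ P_i. -/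
theorem log2N_formulation_soundness
    {n m N : ℕ} (nv : Fin N → ℕ)
    (v : (i : Fin N) → Fin (nv i) → EuclideanSpace ℝ (Fin n))
    (zbar : Fin N → Fin m → ℝ)
    (hzbar : ∀ i l, zbar i l = 0 ∨ zbar i l = 1)
    (hdistinct : Function.Injective zbar)
    (hcard : N ≤ 2 ^ m)
    (z : Fin m → ℝ) (hz : ∀ l, z l = 0 ∨ z l = 1)
    (lam : (i : Fin N) → Fin (nv i) → ℝ)
    (hlam : ∀ i j, 0 ≤ lam i j ∧ lam i j ≤ 1)
    (x : EuclideanSpace ℝ (Fin n))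
    (hx : x = ∑ i, ∑ j, lam i j • v i j)
    (hsum : (∑ i, ∑ j, lam i j) = 1)
    (hcode : ∀ i, (∑ k ∈ Finset.univ.erase i, ∑ j, lam k j) ≤
      ∑ l, |z l - zbar i l|) :
    ∀ i, z = zbar i →
      (∀ k, k ≠ i → ∀ j, lam k j = 0) ∧
      x ∈ convexHull ℝ (Set.range (v i)) := by
  intro i hzi
  have hrhs : (∑ l, |z l - zbar i l|) = 0 := by
    apply Finset.sum_eq_zero
    intro l _
    simp [hzi]
  have hle := hcode i
  rw [hrhs] at hle
  have hzero : ∀ k ∈ Finset.univ.erase i, (∑ j, lam k j) = 0 := by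
    have h0 : ∀ k ∈ Finset.univ.erase i, 0 ≤ ∑ j, lam k j := by
      intro k _
      exact Finset.sum_nonneg fun j _ => (hlam k j).1
    intro k hk
    have := Finset.sum_nonneg h0
    have heq : (∑ k ∈ Finset.univ.erase i, ∑ j, lam k j) = 0 := le_antisymm hle this
    exact (Finset.sum_eq_zero_iff_of_nonneg h0).mp heq k hk
  have hlamzero : ∀ k, k ≠ i → ∀ j, lam k j = 0 := by
    intro k hk j
    have hsum0 := hzero k (Finset.mem_erase.mpr ⟨hk, Finset.mem_univ k⟩)
    exact (Finset.sum_eq_zero_iff_of_nonneg (fun j _ => (hlam k j).1)).mp hsum0 j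
      (Finset.mem_univ j)
  refine ⟨hlamzero, ?_⟩
  have hsumi : (∑ j, lam i j) = 1 := by
    rw [← hsum]
    symm
    rw [← Finset.add_sum_erase _ _ (Finset.mem_univ i)]
    rw [Finset.sum_eq_zero hzero, add_zero]
  have hxi : x = ∑ j, lam i j • v i j := by
    have herase : (∑ k ∈ Finset.univ.erase i, ∑ j, lam k j • v k j) = 0 := by
      apply Finset.sum_eq_zero
      intro k hk
      apply Finset.sum_eq_zero
      intro j _
      rw [hlamzero k (Finset.mem_erase.mp hk).1 j, zero_smul]
    rw [hx, ← Finset.add_sum_erase _ _ (Finset.mem_univ i), herase, add_zero]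
  rw [hxi]
  have := Finset.centerMass_mem_convexHull (Finset.univ : Finset (Fin (nv i)))
    (fun j _ => (hlam i j).1) (by rw [hsumi]; norm_num)
    (fun j _ => Set.mem_range_self (f := v i) j)
  rwa [Finset.centerMass, hsumi, inv_one, one_smul] at this
end

section
/- The projection onto x of the feasible set of the log₂N formulation with z ∈ {0,1}^m equals the union ⋃_{i=1}^N P_i of the N polytopes, provided the codes z̄_i are distinct. -/
theorem log2N_formulation_projection
    {n m N : ℕ} (nv : Fin N → ℕ)
    (v : (i : Fin N) → Fin (nv i) → EuclideanSpace ℝ (Fin n))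
    (zbar : Fin N → Fin m → ℝ)
    (hzbar : ∀ i l, zbar i l = 0 ∨ zbar i l = 1)
    (hdistinct : Function.Injective zbar) :
    {x : EuclideanSpace ℝ (Fin n) |
      ∃ (z : Fin m → ℝ) (lam : (i : Fin N) → Fin (nv i) → ℝ),
        (∀ l, z l = 0 ∨ z l = 1) ∧
        (∀ i j, 0 ≤ lam i j ∧ lam i j ≤ 1) ∧
        x = ∑ i, ∑ j, lam i j • v i j ∧
        (∑ i, ∑ j, lam i j) = 1 ∧
        (∀ i, (∑ k ∈ Finset.univ.erase i, ∑ j, lam k j) ≤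
          ∑ l, |z l - zbar i l|) ∧
        ∃ i, z = zbar i} =
    ⋃ i, convexHull ℝ (Set.range (v i)) := by
  ext x
  simp only [Set.mem_setOf_eq, Set.mem_iUnion]
  constructor
  · rintro ⟨z, lam, hz, hlam, hx, hsum, hham, i, rfl⟩
    have hzero : ∀ k ∈ Finset.univ.erase i, ∀ j, lam k j = 0 := by
      have h0 : (∑ k ∈ Finset.univ.erase i, ∑ j, lam k j) ≤ 0 := by
        have := hham i
        simpa using this
      intro k hk j
      have hnn : ∀ k ∈ Finset.univ.erase i, 0 ≤ ∑ j, lam k j := fun k _ =>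
        Finset.sum_nonneg fun j _ => (hlam k j).1
      have hk0 : ∑ j, lam k j = 0 :=
        le_antisymm (le_trans (Finset.single_le_sum hnn hk) h0) (hnn k hk)
      exact (Finset.sum_eq_zero_iff_of_nonneg (fun j _ => (hlam k j).1)).mp hk0 j
        (Finset.mem_univ j)
    have hxi : x = ∑ j, lam i j • v i j := by
      rw [hx, ← Finset.add_sum_erase _ _ (Finset.mem_univ i),
        Finset.sum_eq_zero fun k hk => Finset.sum_eq_zero fun j _ => by
          rw [hzero k hk j, zero_smul], add_zero]
    have hsumi : ∑ j, lam i j = 1 := by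
      rw [← hsum, ← Finset.add_sum_erase _ _ (Finset.mem_univ i),
        Finset.sum_eq_zero fun k hk => Finset.sum_eq_zero fun j _ => hzero k hk j, add_zero]
    refine ⟨i, ?_⟩
    rw [hxi, ← Finset.univ.centerMass_eq_of_sum_1 (v i) hsumi]
    exact Finset.univ.centerMass_mem_convexHull (fun j _ => (hlam i j).1)
      (by rw [hsumi]; norm_num) (fun j _ => Set.mem_range_self j)
  · rintro ⟨i, hx⟩
    rw [convexHull_range_eq_exists_affineCombination] at hx
    obtain ⟨s, w, hw0, hw1, hwx⟩ := hx
    set w' : Fin (nv i) → ℝ := fun j => if j ∈ s then w j else 0 with hw'def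
    have hw'0 : ∀ j, 0 ≤ w' j := by
      intro j; simp only [hw'def]
      split
      · exact hw0 j ‹_›
      · exact le_refl 0
    have hw'sum : ∑ j, w' j = 1 := by
      rw [hw'def]
      rw [Finset.sum_ite_mem, Finset.univ_inter]
      exact hw1
    have hw'1 : ∀ j, w' j ≤ 1 := by
      intro j
      calc w' j ≤ ∑ j', w' j' :=
            Finset.single_le_sum (fun j' _ => hw'0 j') (Finset.mem_univ j)
        _ = 1 := hw'sum
    have hxeq : x = ∑ j, w' j • v i j := by
      rw [← hwx, affineCombination_eq_centerMass hw1, Finset.centerMass_eq_of_sum_1 _ _ hw1]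
      rw [hw'def]
      simp only [ite_smul, zero_smul]
      rw [Finset.sum_ite_mem, Finset.univ_inter]
    refine ⟨zbar i, fun k j => if h : k = i then w' (h ▸ j) else 0, hzbar i, ?_, ?_, ?_, ?_, i, rfl⟩
    · intro k j
      dsimp only
      split
      · next h => exact ⟨hw'0 _, hw'1 _⟩
      · exact ⟨le_refl 0, zero_le_one⟩
    · rw [Finset.sum_eq_single_of_mem i (Finset.mem_univ i)
        (fun k _ hk => Finset.sum_eq_zero fun j _ => by
          simp only [dif_neg hk, zero_smul])]
      simpa using hxeq
    · rw [Finset.sum_eq_single_of_mem i (Finset.mem_univ i)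
        (fun k _ hk => Finset.sum_eq_zero fun j _ => by simp only [dif_neg hk])]
      simpa using hw'sum
    · intro i'
      by_cases hii : i' = i
      · subst hii
        have : (∑ k ∈ Finset.univ.erase i', ∑ j, if h : k = i' then w' (h ▸ j) else 0) = 0 :=
          Finset.sum_eq_zero fun k hk => Finset.sum_eq_zero fun j _ =>
            by simp only [dif_neg (Finset.ne_of_mem_erase hk)]
        rw [this]
        exact Finset.sum_nonneg fun l _ => abs_nonneg _
      · have hlhs : (∑ k ∈ Finset.univ.erase i', ∑ j, if h : k = i then w' (h ▸ j) else 0) = 1 := by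
          rw [Finset.sum_eq_single_of_mem i
            (Finset.mem_erase.mpr ⟨fun h => hii h.symm, Finset.mem_univ i⟩)
            (fun k _ hk => Finset.sum_eq_zero fun j _ => by simp only [dif_neg hk])]
          simpa using hw'sum
        rw [hlhs]
        have hne : zbar i ≠ zbar i' := fun h => hii (hdistinct h).symm
        obtain ⟨l, hl⟩ := Function.ne_iff.mp hne
        have habs : |zbar i l - zbar i' l| = 1 := by
          rcases hzbar i l with h1 | h1 <;> rcases hzbar i' l with h2 | h2 <;> simp_all
        calc (1 : ℝ) = |zbar i l - zbar i' l| := habs.symm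
          _ ≤ ∑ l, |zbar i l - zbar i' l| :=
            Finset.single_le_sum (f := fun l => |zbar i l - zbar i' l|)
              (fun l _ => abs_nonneg _) (Finset.mem_univ l)
end
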